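/- Let A be an automorphism of the binary rooted tree acting transitively on levels and B any tree endomorphism. Define Exp_A(B)_n(w) = A^{ψ(B(w))}(w) for words w of length n, where ψ(v) = Σ_i v_i 2^i. Then each Exp_A(B)_n is an endomorphism of the finite binary tree of depth n, and these maps are compatible: for any word w of length n and letters x, y, Exp_A(B)_{n+1}(wx) and Exp_A(B)_{n+1}(wy) have the same length-n prefix, equal to Exp_A(B)_n(w). -/

import Mathlib

/-!
A level-transitive `A` permutes the `2 ^ n` words of length `n` as a single cycle, so
`A ^ (2 ^ n)` fixes every word of length `n`. If `B (w ++ [x]) = B w ++ [c]`, then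
`ψ (B (w ++ [x])) = ψ (B w) + 2 ^ n * c`; the extra `2 ^ n * c` iterations of `A` fix `w`
and so can only change the last letter of `w ++ [x]`.
-/

/-- A (level-preserving, adjacency-preserving) endomorphism of the rooted tree `X*`. -/
def IsEndo {X : Type*} (f : List X → List X) : Prop :=
  (∀ w, (f w).length = w.length) ∧ ∀ w a, ∃ b, f (w ++ [a]) = f w ++ [b]

/-- `ψ(w) = ∑ w_i 2^i`: the integer encoded by a binary word
(least significant bit first). -/
def wordToNat {d : ℕ} (w : List (Fin d)) : ℕ :=
  w.foldr (fun a acc => a.val + d * acc) 0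

open Function Set

namespace IsEndo

variable {X : Type*} {f g : List X → List X}

lemma comp (hf : IsEndo f) (hg : IsEndo g) : IsEndo (f ∘ g) := by
  refine ⟨fun w => by rw [comp_apply, hf.1, hg.1], fun w a => ?_⟩
  obtain ⟨b, hb⟩ := hg.2 w a
  obtain ⟨c, hc⟩ := hf.2 (g w) b
  exact ⟨c, by rw [comp_apply, comp_apply, hb, hc]⟩

lemma iterate (hf : IsEndo f) (k : ℕ) : IsEndo f^[k] := by
  induction k with
  | zero => exact ⟨fun _ => rfl, fun _ a => ⟨a, rfl⟩⟩
  | succ k ih => rw [iterate_succ]; exact ih.comp hf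

lemma take_length_append_singleton (hf : IsEndo f) (w : List X) (x : X) :
    (f (w ++ [x])).take w.length = f w := by
  obtain ⟨b, hb⟩ := hf.2 w x
  rw [hb, List.take_left' (hf.1 w)]

end IsEndo

section wordToNat

variable {d : ℕ}

lemma wordToNat_cons (a : Fin d) (u : List (Fin d)) :
    wordToNat (a :: u) = a + d * wordToNat u := rfl

lemma wordToNat_singleton (a : Fin d) : wordToNat [a] = a := by
  simp [wordToNat]

lemma wordToNat_append (u v : List (Fin d)) :
    wordToNat (u ++ v) = wordToNat u + d ^ u.length * wordToNat v := by
  induction u with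
  | nil => simp [wordToNat]
  | cons a u ih =>
    rw [List.cons_append, wordToNat_cons, wordToNat_cons, ih, List.length_cons, pow_succ]
    ring

end wordToNat

lemma Function.minimalPeriod_eq_ncard {α : Type*} {f : α → α} {s : Set α} {x : α}
    (hf : MapsTo f s s) (hx : x ∈ s) (htrans : ∀ y ∈ s, ∀ z ∈ s, ∃ k, f^[k] y = z) :
    minimalPeriod f x = s.ncard := by
  obtain ⟨k, hk⟩ := htrans (f x) (hf hx) x hx
  have hpos : 0 < minimalPeriod f x :=
    IsPeriodicPt.minimalPeriod_pos k.succ_pos (by rwa [IsPeriodicPt, IsFixedPt, iterate_succ_apply])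
  have horbit : s = (f^[·] x) '' Iio (minimalPeriod f x) := by
    ext y
    constructor
    · intro hy
      obtain ⟨n, rfl⟩ := htrans x hx y hy
      exact ⟨n % minimalPeriod f x, Nat.mod_lt _ hpos, iterate_mod_minimalPeriod_eq⟩
    · rintro ⟨n, -, rfl⟩
      exact hf.iterate n hx
  rw [horbit, iterate_injOn_Iio_minimalPeriod.ncard_image, ← Finset.coe_Iio, ncard_coe_finset,
    Nat.card_Iio]

lemma List.ncard_setOf_length_eq (α : Type*) [Fintype α] (n : ℕ) :
    {l : List α | l.length = n}.ncard = Fintype.card α ^ n := by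
  rw [← Nat.card_coe_set_eq, ← card_vector n]
  exact Nat.card_eq_fintype_card (α := List.Vector α n)

lemma iterate_card_pow_length_eq_self {X : Type*} [Fintype X] {A : List X → List X}
    (hA : ∀ w, (A w).length = w.length)
    (htrans : ∀ u v : List X, u.length = v.length → ∃ k, A^[k] u = v) (w : List X) :
    A^[Fintype.card X ^ w.length] w = w := by
  have hperiod := minimalPeriod_eq_ncard (s := {v : List X | v.length = w.length})
    (fun v (hv : v.length = w.length) => (hA v).trans hv) (rfl : w.length = w.length)
    (fun u hu v hv => htrans u v (hu.trans hv.symm))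
  rw [← List.ncard_setOf_length_eq, ← hperiod]
  exact iterate_minimalPeriod

lemma isEndo_iterate_wordToNat {d : ℕ} {A B : List (Fin d) → List (Fin d)} (hA : IsEndo A)
    (hper : ∀ w, A^[d ^ w.length] w = w) (hB : IsEndo B) :
    IsEndo (fun w => A^[wordToNat (B w)] w) := by
  refine ⟨fun w => (hA.iterate _).1 w, fun w a => ?_⟩
  obtain ⟨c, hc⟩ := hB.2 w a
  obtain ⟨b₀, hb₀⟩ := (hA.iterate (d ^ w.length * c)).2 w a
  obtain ⟨b, hb⟩ := (hA.iterate (wordToNat (B w))).2 w b₀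
  have hfix : A^[d ^ w.length * c] w = w := IsPeriodicPt.mul_const (hper w) c
  refine ⟨b, ?_⟩
  beta_reduce
  rw [hc, wordToNat_append, wordToNat_singleton, hB.1, iterate_add_apply, hb₀, hfix, hb]

theorem stmt16_general (A B : List (Fin 2) → List (Fin 2))
    (hA : IsEndo A)
    (htrans : ∀ u v : List (Fin 2), u.length = v.length → ∃ k, A^[k] u = v)
    (hB : IsEndo B) :
    IsEndo (fun w => A^[wordToNat (B w)] w) ∧
      ∀ (w : List (Fin 2)) (x : Fin 2),
        (A^[wordToNat (B (w ++ [x]))] (w ++ [x])).take w.length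
          = A^[wordToNat (B w)] w := by
  have hper : ∀ w : List (Fin 2), A^[2 ^ w.length] w = w := by
    simpa using iterate_card_pow_length_eq_self hA.1 htrans
  have hexp := isEndo_iterate_wordToNat hA hper hB
  exact ⟨hexp, hexp.take_length_append_singleton⟩

/-- For `A` a level-transitive automorphism of the binary tree and `B` any tree
endomorphism, `Exp_A(B) : w ↦ A^{ψ(B(w))}(w)` is an endomorphism of the tree: it is
level-preserving and prefix-compatible, so that for any word `w` of length `n` and
letters `x`, `y`, the words `Exp_A(B)(wx)` and `Exp_A(B)(wy)` share the length-`n`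
prefix `Exp_A(B)(w)`. -/
theorem stmt16 (A B : List (Fin 2) → List (Fin 2))
    (hA : IsEndo A) (hAbij : Function.Bijective A)
    (htrans : ∀ u v : List (Fin 2), u.length = v.length → ∃ k, A^[k] u = v)
    (hB : IsEndo B) :
    IsEndo (fun w => A^[wordToNat (B w)] w) ∧
      ∀ (w : List (Fin 2)) (x : Fin 2),
        (A^[wordToNat (B (w ++ [x]))] (w ++ [x])).take w.length
          = A^[wordToNat (B w)] w :=
  stmt16_general A B hA htrans hB
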